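/- Let c < 0 and λ = (−4c)^{1/4}. Define φ : U = {(x,y) ∈ ℝ² : x > y} → ℝ² by φ(x,y) = (λ(x−y)^{−1/2}, −(λ/2)(x+y)(x−y)^{−1/2}). Then φ is smooth and for every p = (x,y) ∈ U, writing (u,v) = φ(p), the total derivative Dφ(p) satisfies Dφ(p)(1,1) = (0, −u), Dφ(p)(x,y) = (−u/2, v/2), and Dφ(p)(x²,y²) = (v, c/u³). Thus φ pushes the basis ∂_x+∂_y, x∂_x+y∂_y, x²∂_x+y²∂_y of the Lie algebra I₄ forward to the basis −u∂_v, ½(v∂_v − u∂_u), v∂_u + (c/u³)∂_v of the Vessiot–Guldberg Lie algebra of the Milne–Pinney equations with parameter c; hence for c < 0 the Milne–Pinney system is locally diffeomorphic to the class I₄. -/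

import Mathlib

namespace Stmt11

/-- The map φ(x,y) = (λ(x−y)^{-1/2}, −(λ/2)(x+y)(x−y)^{-1/2}). -/
noncomputable def φ (l : ℝ) : ℝ × ℝ → ℝ × ℝ :=
  fun p => (l / Real.sqrt (p.1 - p.2),
            -(l / 2) * (p.1 + p.2) / Real.sqrt (p.1 - p.2))

/-- For c < 0 and λ = (−4c)^{1/4}, the map φ is smooth on {x > y} and pushes the basis
∂ₓ+∂_y, x∂ₓ+y∂_y, x²∂ₓ+y²∂_y of I₄ forward to the basis −u∂_v, ½(v∂_v − u∂_u),
v∂_u + (c/u³)∂_v of the Vessiot–Guldberg Lie algebra of the Milne–Pinney equations: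
for c < 0 the Milne–Pinney system is locally diffeomorphic to the class I₄. -/
theorem stmt_11 (c l : ℝ) (hc : c < 0) (hl : l = (-4 * c) ^ ((1 : ℝ) / 4)) :
    ContDiffOn ℝ (⊤ : ℕ∞) (φ l) {p : ℝ × ℝ | p.1 > p.2} ∧
    ∀ p ∈ {p : ℝ × ℝ | p.1 > p.2},
      fderiv ℝ (φ l) p (1, 1) = (0, -(φ l p).1) ∧
      fderiv ℝ (φ l) p (p.1, p.2) = (-(φ l p).1 / 2, (φ l p).2 / 2) ∧
      fderiv ℝ (φ l) p (p.1 ^ 2, p.2 ^ 2) = ((φ l p).2, c / (φ l p).1 ^ 3) := by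
  have hl4 : l ^ 4 = -4 * c := by
    have h4c : (0:ℝ) < -4 * c := by linarith
    rw [hl, ← Real.rpow_natCast ((-4*c) ^ ((1:ℝ)/4)) 4, ← Real.rpow_mul h4c.le]
    norm_num
  have hlpos : 0 < l := by
    rw [hl]; exact Real.rpow_pos_of_pos (by linarith) _
  have hφeq : φ l = fun q : ℝ × ℝ =>
      (l * (Real.sqrt (q.1 - q.2))⁻¹, -(l/2) * (q.1 + q.2) * (Real.sqrt (q.1 - q.2))⁻¹) := by
    funext q; simp [φ, div_eq_mul_inv, mul_assoc]
  constructor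
  · intro p hp
    have hs : (0:ℝ) < p.1 - p.2 := sub_pos.mpr hp
    have hsub : ContDiffAt ℝ (⊤ : ℕ∞) (fun q : ℝ × ℝ => q.1 - q.2) p :=
      (contDiff_fst.sub contDiff_snd).contDiffAt
    have hsqrt : ContDiffAt ℝ (⊤ : ℕ∞) (fun q : ℝ × ℝ => Real.sqrt (q.1 - q.2)) p :=
      (Real.contDiffAt_sqrt hs.ne').comp p hsub
    have hsq : Real.sqrt (p.1 - p.2) ≠ 0 := (Real.sqrt_pos.mpr hs).ne'
    exact (((contDiffAt_const (c := l)).div hsqrt hsq).prodMk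
      (((contDiffAt_const (c := -(l/2))).mul
        ((contDiff_fst.add contDiff_snd).contDiffAt)).div hsqrt hsq)).contDiffWithinAt
  · intro p hp
    have hs : (0:ℝ) < p.1 - p.2 := sub_pos.mpr hp
    set r := Real.sqrt (p.1 - p.2) with hrdef
    have hr0 : 0 < r := Real.sqrt_pos.mpr hs
    have hrr : r * r = p.1 - p.2 := Real.mul_self_sqrt hs.le
    have hinv0 : HasDerivAt (fun t : ℝ => (Real.sqrt t)⁻¹)
        (-(1 / (2 * Real.sqrt (p.1 - p.2))) / Real.sqrt (p.1 - p.2) ^ 2) (p.1 - p.2) :=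
      (Real.hasDerivAt_sqrt hs.ne').inv hr0.ne'
    have hinv : HasFDerivAt (fun q : ℝ × ℝ => (Real.sqrt (q.1 - q.2))⁻¹)
        ((-(1 / (2 * r)) / r ^ 2) •
          ((ContinuousLinearMap.fst ℝ ℝ ℝ) - (ContinuousLinearMap.snd ℝ ℝ ℝ))) p :=
      hinv0.comp_hasFDerivAt (f := fun q : ℝ × ℝ => q.1 - q.2) p (hasFDerivAt_fst.sub hasFDerivAt_snd)
    have h1 : HasFDerivAt (fun q : ℝ × ℝ => l * (Real.sqrt (q.1 - q.2))⁻¹) _ p :=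
      hinv.const_mul l
    have hnum : HasFDerivAt (fun q : ℝ × ℝ => -(l/2) * (q.1 + q.2))
        ((-(l/2)) • ((ContinuousLinearMap.fst ℝ ℝ ℝ) + (ContinuousLinearMap.snd ℝ ℝ ℝ))) p :=
      (hasFDerivAt_fst.add hasFDerivAt_snd).const_mul (-(l/2))
    have h2 : HasFDerivAt
        (fun q : ℝ × ℝ => -(l/2) * (q.1 + q.2) * (Real.sqrt (q.1 - q.2))⁻¹) _ p :=
      hnum.mul hinv
    rw [hφeq]
    rw [(h1.prodMk h2).fderiv]
    have hl0 : l ≠ 0 := hlpos.ne'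
    refine ⟨?_, ?_, ?_⟩ <;>
      simp only [φ, ContinuousLinearMap.prod_apply, ContinuousLinearMap.smul_apply,
        ContinuousLinearMap.add_apply, ContinuousLinearMap.sub_apply,
        ContinuousLinearMap.coe_fst', ContinuousLinearMap.coe_snd',
        smul_eq_mul, Prod.mk.injEq, ← hrdef] <;>
      refine ⟨?_, ?_⟩ <;> field_simp
    · ring
    · ring
    · linear_combination hrr
    · linear_combination (-(p.1+p.2)) * hrr
    · linear_combination (p.1+p.2) * hrr
    · linear_combination ((p.1+p.2)^2*(p.1-p.2) - 2*r^2*(p.1^2+p.2^2)) * hl4 +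
        (-4*c*(r^4 + (p.1-p.2)*r^2 + (p.1-p.2)^2 - 2*(p.1^2+p.2^2))) * hrr

end Stmt11
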